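/- arXiv:0908.1397 — 6 statements merged into one kernel-verified Lean document; each statement's English description precedes it below -/
import Mathlib

section
/- For all real numbers x, y and all real p ≥ 2, it holds that |x+y|^p + |x-y|^p ≤ 2^(p-1) (|x|^p + |y|^p). -/
open NNReal

theorem stmt_0 (x y p : ℝ) (hp : 2 ≤ p) :
    |x + y| ^ p + |x - y| ^ p ≤ (2 : ℝ) ^ (p - 1) * (|x| ^ p + |y| ^ p) := by
  have h1 : (1:ℝ) ≤ p/2 := by linarith
  have h2 : (2:ℝ) * (p/2) = p := by ring
  set a := ‖x+y‖₊ with ha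
  set b := ‖x-y‖₊ with hb
  set c := ‖x‖₊ with hc
  set d := ‖y‖₊ with hd
  have key : a^p + b^p ≤ (2:ℝ≥0)^(p-1) * (c^p + d^p) := by
    have step1 : a^p + b^p ≤ (a^(2:ℝ) + b^(2:ℝ))^(p/2) := by
      have h := NNReal.add_rpow_le_rpow_add (a^(2:ℝ)) (b^(2:ℝ)) h1
      rwa [← NNReal.rpow_mul, ← NNReal.rpow_mul, h2] at h
    have par : a^(2:ℝ) + b^(2:ℝ) = 2*(c^(2:ℝ) + d^(2:ℝ)) := by
      apply NNReal.coe_injective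
      push_cast [NNReal.coe_rpow, ha, hb, hc, hd, coe_nnnorm, Real.norm_eq_abs,
        Real.rpow_two]
      nlinarith [sq_abs (x+y), sq_abs (x-y), sq_abs x, sq_abs y]
    have h3 : (c^(2:ℝ) + d^(2:ℝ))^(p/2) ≤ (2:ℝ≥0)^(p/2-1) * ((c^(2:ℝ))^(p/2) + (d^(2:ℝ))^(p/2)) :=
      NNReal.rpow_add_le_mul_rpow_add_rpow _ _ h1
    rw [← NNReal.rpow_mul, ← NNReal.rpow_mul, h2] at h3
    have step2 : (a^(2:ℝ) + b^(2:ℝ))^(p/2) ≤ (2:ℝ≥0)^(p-1) * (c^p + d^p) := by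
      rw [par, NNReal.mul_rpow]
      calc (2:ℝ≥0)^(p/2) * (c^(2:ℝ) + d^(2:ℝ))^(p/2)
          ≤ (2:ℝ≥0)^(p/2) * ((2:ℝ≥0)^(p/2-1) * (c^p + d^p)) := mul_le_mul_right h3 _
        _ = (2:ℝ≥0)^(p-1) * (c^p + d^p) := by
            rw [← mul_assoc, ← NNReal.rpow_add two_ne_zero,
              show p/2 + (p/2-1) = p - 1 from by ring]
    exact step1.trans step2
  have h4 := NNReal.coe_le_coe.2 key
  push_cast [NNReal.coe_rpow, ha, hb, hc, hd, coe_nnnorm, Real.norm_eq_abs] at h4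
  exact_mod_cast h4
end

section
/- For all real numbers x, y and all real p ≥ 2, |x+y|^p + |x-y|^p ≤ 2^(p-1)(|x|^p + |y|^p) − ((|x|−|y|)^2 / 4) · ( p(p−1)(|x|+|y|)^(p−2) − 2·||x|−|y||^(p−2) ). -/
open Real Set

private lemma superadd' {x y r : ℝ} (hx : 0 ≤ x) (hy : 0 ≤ y) (hr : 1 ≤ r) :
    x ^ r + y ^ r ≤ (x + y) ^ r := by
  have hr0 : r ≠ 0 := by linarith
  have e : ∀ a : ℝ, 0 ≤ a → a ^ r = a * a ^ (r - 1) := by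
    intro a ha
    rw [show r = 1 + (r - 1) by ring, Real.rpow_add' ha (by simpa using hr0), Real.rpow_one]
    norm_num
  rw [e x hx, e y hy, e (x + y) (by linarith)]
  have h1 : x ^ (r - 1) ≤ (x + y) ^ (r - 1) :=
    Real.rpow_le_rpow hx (by linarith) (by linarith)
  have h2 : y ^ (r - 1) ≤ (x + y) ^ (r - 1) :=
    Real.rpow_le_rpow hy (by linarith) (by linarith)
  nlinarith [Real.rpow_nonneg hx (r - 1), Real.rpow_nonneg hy (r - 1)]

private lemma bern' {s t r : ℝ} (hs : 0 < s) (ht : 0 ≤ t) (hr : 1 ≤ r) :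
    s ^ r + r * t * s ^ (r - 1) ≤ (s + t) ^ r := by
  have h1 : (1 : ℝ) + r * (t / s) ≤ (1 + t / s) ^ r :=
    one_add_mul_self_le_rpow_one_add (by nlinarith [div_nonneg ht hs.le]) hr
  have h2 : (s + t) ^ r = s ^ r * (1 + t / s) ^ r := by
    rw [← Real.mul_rpow hs.le (by positivity)]
    congr 1; field_simp
  have h3 : s ^ r * (1 + r * (t / s)) = s ^ r + r * t * s ^ (r - 1) := by
    rw [Real.rpow_sub hs, Real.rpow_one]; field_simp
  rw [h2, ← h3]
  have := Real.rpow_pos_of_pos hs r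
  nlinarith

private lemma convex_pair {q U V u v : ℝ} (hq : 1 ≤ q) (hV : 0 ≤ V) (hVu : V ≤ u)
    (hVv : V ≤ v) (huU : u ≤ U) (hsum : u + v = U + V) :
    u ^ q + v ^ q ≤ U ^ q + V ^ q := by
  rcases eq_or_lt_of_le (hVu.trans huU) with h | h
  · have hu : u = U := le_antisymm huU (h ▸ hVu)
    have hv : v = V := by linarith
    rw [hu, hv]
  · set l := (u - V) / (U - V) with hl
    have hUV : 0 < U - V := sub_pos.mpr h
    have hl0 : 0 ≤ l := div_nonneg (by linarith) hUV.le
    have hl1 : l ≤ 1 := by rw [hl, div_le_one hUV]; linarith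
    have key : l * (U - V) = u - V := div_mul_cancel₀ _ hUV.ne'
    have hU0 : (0:ℝ) ≤ U := hV.trans h.le
    have hc := (convexOn_rpow hq).2
    have h1 := hc (mem_Ici.mpr hU0) (mem_Ici.mpr hV) hl0
      (show (0:ℝ) ≤ 1 - l by linarith) (show l + (1 - l) = 1 by ring)
    have h2 := hc (mem_Ici.mpr hU0) (mem_Ici.mpr hV)
      (show (0:ℝ) ≤ 1 - l by linarith) hl0 (show (1 - l) + l = 1 by ring)
    simp only [smul_eq_mul] at h1 h2
    have e1 : l * U + (1 - l) * V = u := by linear_combination key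
    have e2 : (1 - l) * U + l * V = v := by linear_combination -key - hsum
    rw [e1] at h1
    rw [e2] at h2
    linarith

private lemma mainCalc {p s d : ℝ} (hp : 2 ≤ p) (hd : 0 ≤ d) (hds : d ≤ s) :
    s ^ p + d ^ p / 2 + p * (p - 1) / 4 * s ^ (p - 2) * d ^ (2:ℕ) ≤
      ((s + d) ^ p + (s - d) ^ p) / 2 := by
  have hp0 : p ≠ 0 := by linarith
  rcases eq_or_lt_of_le (hd.trans hds) with hs | hs
  · have hd0 : d = 0 := le_antisymm (hs ▸ hds) hd
    subst hd0
    rw [← hs]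
    simp [Real.zero_rpow hp0]
  · set G : ℝ → ℝ := fun t =>
      ((s + t) ^ p + (s - t) ^ p) / 2 - t ^ p / 2 - p * (p - 1) / 4 * s ^ (p - 2) * t ^ (2:ℕ)
      with hG
    have hderiv : ∀ t ∈ Ioo (0:ℝ) s, HasDerivAt G
        ((p * (s + t) ^ (p - 1) * 1 + p * (s - t) ^ (p - 1) * (-1)) / 2
          - p * t ^ (p - 1) / 2
          - p * (p - 1) / 4 * s ^ (p - 2) * ((2:ℕ) * t ^ (2 - 1))) t := by
      intro t ht
      obtain ⟨ht0, hts⟩ := ht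
      have g1 : HasDerivAt (fun t : ℝ => (s + t) ^ p) (p * (s + t) ^ (p - 1) * 1) t :=
        (Real.hasDerivAt_rpow_const (Or.inl (by positivity))).comp t
          ((hasDerivAt_id t).const_add s)
      have g2 : HasDerivAt (fun t : ℝ => (s - t) ^ p) (p * (s - t) ^ (p - 1) * (-1)) t := by
        have hinner : HasDerivAt (fun t : ℝ => s - t) (-1) t := by
          simpa using (hasDerivAt_id t).const_sub s
        exact (Real.hasDerivAt_rpow_const
          (Or.inl (ne_of_gt (show (0:ℝ) < s - t by linarith)))).comp t hinner
      have g3 : HasDerivAt (fun t : ℝ => t ^ p) (p * t ^ (p - 1)) t :=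
        Real.hasDerivAt_rpow_const (Or.inl ht0.ne')
      have g4 : HasDerivAt (fun t : ℝ => t ^ (2:ℕ)) ((2:ℕ) * t ^ (2 - 1)) t :=
        hasDerivAt_pow 2 t
      exact (((g1.add g2).div_const 2).sub (g3.div_const 2)).sub
        (g4.const_mul (p * (p - 1) / 4 * s ^ (p - 2)))
    have hcont : ContinuousOn G (Icc 0 s) := by
      have hc : Continuous fun u : ℝ => u ^ p :=
        continuous_iff_continuousAt.mpr fun u =>
          Real.continuousAt_rpow_const u p (Or.inr (by linarith))
      apply Continuous.continuousOn
      exact (((hc.comp (continuous_const.add continuous_id)).add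
        (hc.comp (continuous_const.sub continuous_id))).div_const 2).sub
        (hc.div_const 2) |>.sub (continuous_const.mul (continuous_pow 2))
    have hmono : MonotoneOn G (Icc 0 s) := by
      apply monotoneOn_of_deriv_nonneg (convex_Icc 0 s) hcont
      · intro t ht
        rw [interior_Icc] at ht
        exact ((hderiv t ht).differentiableAt).differentiableWithinAt
      · intro t ht
        rw [interior_Icc] at ht
        rw [(hderiv t ht).deriv]
        obtain ⟨ht0, hts⟩ := ht
        have hA : s ^ (p-1) + (p-1) * t * s ^ (p-1-1) ≤ (s + t) ^ (p-1) :=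
          bern' hs ht0.le (by linarith)
        have hB : (s - t) ^ (p-1) + t ^ (p-1) ≤ ((s - t) + t) ^ (p-1) :=
          superadd' (by linarith) ht0.le (by linarith)
        rw [show s - t + t = s by ring] at hB
        have hE : p - 1 - 1 = p - 2 := by ring
        rw [hE] at hA
        have hp1 : (0:ℝ) < p := by linarith
        simp only [Nat.cast_ofNat, pow_one]
        nlinarith [hA, hB]
    have h0 : G 0 ≤ G d := hmono (by constructor <;> simp [hs.le]) ⟨hd, hds⟩ hd
    have hG0 : G 0 = s ^ p := by
      simp [hG, Real.zero_rpow hp0]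
    rw [hG0] at h0
    simp only [hG] at h0
    linarith

theorem stmt_1 (x y p : ℝ) (hp : 2 ≤ p) :
    |x + y| ^ p + |x - y| ^ p ≤
      (2 : ℝ) ^ (p - 1) * (|x| ^ p + |y| ^ p) -
        ((|x| - |y|) ^ (2 : ℕ) / 4) *
          (p * (p - 1) * (|x| + |y|) ^ (p - 2) - 2 * (|(|x| - |y|)|) ^ (p - 2)) := by
  wlog hxy : |y| ≤ |x| with H
  · have h := H y x p hp (le_of_not_ge hxy)
    rw [add_comm y x, abs_sub_comm y x] at h
    have e1 : (|y| - |x|) ^ (2:ℕ) = (|x| - |y|) ^ (2:ℕ) := by ring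
    have e2 : |(|y| - |x|)| = |(|x| - |y|)| := abs_sub_comm _ _
    rw [e1, e2, add_comm |y| |x|] at h
    linarith
  · set a := |x| with ha
    set b := |y| with hb
    have ha0 : 0 ≤ a := abs_nonneg x
    have hb0 : 0 ≤ b := abs_nonneg y
    set s := a + b with hs
    set d := a - b with hdd
    have hd0 : 0 ≤ d := sub_nonneg.mpr hxy
    have hds : d ≤ s := by simp [hs, hdd]; linarith
    have hs0 : 0 ≤ s := by linarith
    have hq1 : (1:ℝ) ≤ p / 2 := by linarith
    -- rpow/square conversions
    have sqrp : ∀ z : ℝ, 0 ≤ z → (z ^ (2:ℕ) : ℝ) ^ (p/2) = z ^ p := by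
      intro z hz
      rw [← Real.rpow_natCast z 2, ← Real.rpow_mul hz]
      congr 1
      push_cast
      ring
    -- step 1
    have habs1 : |(|x| - |y|)| ≤ |x + y| := by
      have := abs_abs_sub_abs_le_abs_sub x (-y)
      simpa [sub_neg_eq_add] using this
    have habs2 : |(|x| - |y|)| ≤ |x - y| := abs_abs_sub_abs_le_abs_sub x y
    have habs3 : |x + y| ≤ s := abs_add_le x y
    have hdabs : |d| = d := abs_of_nonneg hd0
    have hVu : d ^ (2:ℕ) ≤ (x + y) ^ (2:ℕ) := by
      have h1 : |d| ≤ |x + y| := by rw [hdd, ha, hb]; exact habs1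
      nlinarith [sq_abs d, sq_abs (x + y), abs_nonneg d]
    have hVv : d ^ (2:ℕ) ≤ (x - y) ^ (2:ℕ) := by
      have h1 : |d| ≤ |x - y| := by rw [hdd, ha, hb]; exact habs2
      nlinarith [sq_abs d, sq_abs (x - y), abs_nonneg d]
    have huU : (x + y) ^ (2:ℕ) ≤ s ^ (2:ℕ) := by
      nlinarith [sq_abs (x + y), abs_nonneg (x + y), habs3]
    have hsum : (x + y) ^ (2:ℕ) + (x - y) ^ (2:ℕ) = s ^ (2:ℕ) + d ^ (2:ℕ) := by
      rw [hs, hdd, ha, hb]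
      linear_combination (-2 : ℝ) * sq_abs x - 2 * sq_abs y
    have step1 : |x + y| ^ p + |x - y| ^ p ≤ s ^ p + d ^ p := by
      have hcp := convex_pair hq1 (by positivity : (0:ℝ) ≤ d ^ (2:ℕ)) hVu hVv huU hsum
      have c1 : ((x + y) ^ (2:ℕ) : ℝ) ^ (p/2) = |x + y| ^ p := by
        rw [← sq_abs (x + y)]; exact sqrp _ (abs_nonneg _)
      have c2 : ((x - y) ^ (2:ℕ) : ℝ) ^ (p/2) = |x - y| ^ p := by
        rw [← sq_abs (x - y)]; exact sqrp _ (abs_nonneg _)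
      rw [c1, c2, sqrp s hs0, sqrp d hd0] at hcp
      exact hcp
    -- step 2: RHS first term
    have step2 : (2:ℝ) ^ (p - 1) * (a ^ p + b ^ p) = ((s + d) ^ p + (s - d) ^ p) / 2 := by
      have e1 : s + d = 2 * a := by rw [hs, hdd]; ring
      have e2 : s - d = 2 * b := by rw [hs, hdd]; ring
      rw [e1, e2, Real.mul_rpow (by norm_num) ha0, Real.mul_rpow (by norm_num) hb0,
        Real.rpow_sub (by norm_num : (0:ℝ) < 2), Real.rpow_one]
      ring
    -- step 3: d^2 * d^(p-2) = d^p
    have step3 : (d ^ (2:ℕ) : ℝ) * d ^ (p - 2) = d ^ p := by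
      rcases eq_or_lt_of_le hd0 with h0 | h0
      · rw [← h0]
        simp [Real.zero_rpow (show p ≠ 0 by linarith)]
      · rw [← Real.rpow_natCast d 2, ← Real.rpow_add h0]
        norm_num
    have hmain := mainCalc hp hd0 hds
    have hgoal2 : |(|x| - |y|)| = d := by rw [← ha, ← hb, ← hdd]; exact hdabs
    rw [hgoal2]
    have expand : (2:ℝ) ^ (p - 1) * (a ^ p + b ^ p) -
        (d ^ (2:ℕ) / 4) * (p * (p - 1) * s ^ (p - 2) - 2 * d ^ (p - 2)) =
        ((s + d) ^ p + (s - d) ^ p) / 2 - p * (p - 1) / 4 * s ^ (p - 2) * d ^ (2:ℕ)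
          + d ^ p / 2 := by
      rw [step2]
      linear_combination (1/2 : ℝ) * step3
    rw [expand]
    linarith [step1, hmain]
end

section
/- For all real z ∈ [0,1] and real p ≥ 2, (1+z)^p + (1−z)^p ≥ 2 + z^p + (p(p−1)/2) z^2. -/
/-!
Put `F(t) = (1+t)^p + (1-t)^p - t^p - p(p-1)/2 t²`, so `F(0) = 2` and `F'(t) = p φ_{p-1}(t)`,
where `φ_q(t) = (1+t)^q - (1-t)^q - t^q - q t` is `oddGap q t`. It suffices that `φ_q ≥ 0` on
`[0,1]` for `q ≥ 1`. For `q ≥ 2` this follows from `φ_q(0) = 0` and `φ_q' ≥ 0`, by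
superadditivity of `x ↦ x^(q-1)`. For `1 ≤ q ≤ 2` the function `φ_q` is concave on `[0,1]`
(as `x ↦ x^(q-2)` is antitone), and it is nonnegative at both endpoints, `φ_q(1) = 2^q - 1 - q ≥ 0`
being Bernoulli's inequality.
-/

open Real Set

lemma monotoneOn_Icc_of_hasDerivAt_nonneg {f f' : ℝ → ℝ} {a b : ℝ}
    (hf : ∀ t, HasDerivAt f (f' t) t) (hf' : ∀ t ∈ Ioo a b, 0 ≤ f' t) :
    MonotoneOn f (Icc a b) :=
  monotoneOn_of_hasDerivWithinAt_nonneg (convex_Icc a b)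
    (fun t _ ↦ (hf t).continuousAt.continuousWithinAt)
    (fun t _ ↦ (hf t).hasDerivWithinAt) (by rwa [interior_Icc])

lemma hasDerivAt_one_add_rpow {q t : ℝ} (h : 1 + t ≠ 0 ∨ 1 ≤ q) :
    HasDerivAt (fun x : ℝ ↦ (1 + x) ^ q) (q * (1 + t) ^ (q - 1)) t := by
  simpa using ((hasDerivAt_id t).const_add 1).rpow_const h

lemma hasDerivAt_one_sub_rpow {q t : ℝ} (h : 1 - t ≠ 0 ∨ 1 ≤ q) :
    HasDerivAt (fun x : ℝ ↦ (1 - x) ^ q) (-(q * (1 - t) ^ (q - 1))) t := by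
  simpa using ((hasDerivAt_id t).const_sub 1).rpow_const h

noncomputable def oddGap (q t : ℝ) : ℝ := (1 + t) ^ q - (1 - t) ^ q - t ^ q - q * t

lemma oddGap_zero {q : ℝ} (hq : q ≠ 0) : oddGap q 0 = 0 := by
  simp [oddGap, zero_rpow hq]

lemma hasDerivAt_oddGap {q : ℝ} (hq : 1 ≤ q) (t : ℝ) :
    HasDerivAt (oddGap q)
      (q * ((1 + t) ^ (q - 1) + (1 - t) ^ (q - 1) - t ^ (q - 1) - 1)) t := by
  refine ((((hasDerivAt_one_add_rpow (Or.inr hq)).sub (hasDerivAt_one_sub_rpow (Or.inr hq))).sub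
    (hasDerivAt_rpow_const (Or.inr hq))).sub ((hasDerivAt_id t).const_mul q)).congr_deriv ?_
  ring

lemma oddGap_nonneg_of_two_le {q t : ℝ} (hq : 2 ≤ q) (ht : t ∈ Icc 0 1) : 0 ≤ oddGap q t := by
  have hderiv_nonneg : ∀ s ∈ Ioo (0 : ℝ) 1,
      0 ≤ q * ((1 + s) ^ (q - 1) + (1 - s) ^ (q - 1) - s ^ (q - 1) - 1) := by
    rintro s ⟨hs0, hs1⟩
    have hsuperadd : 1 + s ^ (q - 1) ≤ (1 + s) ^ (q - 1) := by
      simpa using add_rpow_le_rpow_add zero_le_one hs0.le (by linarith : 1 ≤ q - 1)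
    have : 0 ≤ (1 - s) ^ (q - 1) := rpow_nonneg (by linarith) _
    exact mul_nonneg (by linarith) (by linarith)
  calc 0 = oddGap q 0 := (oddGap_zero (by linarith)).symm
    _ ≤ oddGap q t := monotoneOn_Icc_of_hasDerivAt_nonneg (hasDerivAt_oddGap (by linarith))
      hderiv_nonneg (left_mem_Icc.2 zero_le_one) ht ht.1

lemma hasDerivAt_one_add_rpow_add_one_sub_rpow_sub_rpow {r t : ℝ} (ht0 : 0 < t) (ht1 : t < 1) :
    HasDerivAt (fun x ↦ (1 + x) ^ r + (1 - x) ^ r - x ^ r - 1)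
      (r * ((1 + t) ^ (r - 1) - (1 - t) ^ (r - 1) - t ^ (r - 1))) t := by
  refine ((((hasDerivAt_one_add_rpow (q := r) (Or.inl (by linarith))).add
    (hasDerivAt_one_sub_rpow (Or.inl (by linarith)))).sub
    (hasDerivAt_rpow_const (Or.inl ht0.ne'))).sub_const 1).congr_deriv ?_
  ring

lemma concaveOn_oddGap {q : ℝ} (hq1 : 1 ≤ q) (hq2 : q ≤ 2) : ConcaveOn ℝ (Icc 0 1) (oddGap q) := by
  refine concaveOn_of_hasDerivWithinAt2_nonpos (convex_Icc 0 1)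
    (f'' := fun t ↦
      q * ((q - 1) * ((1 + t) ^ (q - 1 - 1) - (1 - t) ^ (q - 1 - 1) - t ^ (q - 1 - 1))))
    (fun t _ ↦ (hasDerivAt_oddGap hq1 t).continuousAt.continuousWithinAt)
    (fun t _ ↦ (hasDerivAt_oddGap hq1 t).hasDerivWithinAt) ?_ ?_ <;>
    simp only [interior_Icc] <;> rintro t ⟨ht0, ht1⟩
  · exact ((hasDerivAt_one_add_rpow_add_one_sub_rpow_sub_rpow ht0 ht1).const_mul q).hasDerivWithinAt
  · have h1 : (1 + t) ^ (q - 1 - 1) ≤ 1 :=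
      rpow_le_one_of_one_le_of_nonpos (by linarith) (by linarith)
    have h2 : 1 ≤ (1 - t) ^ (q - 1 - 1) :=
      one_le_rpow_of_pos_of_le_one_of_nonpos (by linarith) (by linarith) (by linarith)
    have h3 : 0 ≤ t ^ (q - 1 - 1) := rpow_nonneg ht0.le _
    exact mul_nonpos_of_nonneg_of_nonpos (by linarith)
      (mul_nonpos_of_nonneg_of_nonpos (by linarith) (by linarith))

lemma oddGap_one_nonneg {q : ℝ} (hq : 1 ≤ q) : 0 ≤ oddGap q 1 := by
  have bernoulli := one_add_mul_self_le_rpow_one_add (s := 1) (by norm_num) hq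
  norm_num [oddGap, zero_rpow (by linarith : q ≠ 0)] at bernoulli ⊢
  linarith

lemma oddGap_nonneg_of_le_two {q t : ℝ} (hq1 : 1 ≤ q) (hq2 : q ≤ 2) (ht : t ∈ Icc 0 1) :
    0 ≤ oddGap q t := by
  have := (concaveOn_oddGap hq1 hq2).ge_on_segment (left_mem_Icc.2 zero_le_one)
    (right_mem_Icc.2 zero_le_one) (by rwa [segment_eq_Icc zero_le_one])
  rw [oddGap_zero (by linarith)] at this
  exact (le_min le_rfl (oddGap_one_nonneg hq1)).trans this

lemma oddGap_nonneg {q t : ℝ} (hq : 1 ≤ q) (ht : t ∈ Icc 0 1) : 0 ≤ oddGap q t := by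
  rcases le_total 2 q with h2q | hq2
  · exact oddGap_nonneg_of_two_le h2q ht
  · exact oddGap_nonneg_of_le_two hq hq2 ht

theorem stmt_3 (z p : ℝ) (hz0 : 0 ≤ z) (hz1 : z ≤ 1) (hp : 2 ≤ p) :
    2 + z ^ p + (p * (p - 1) / 2) * z ^ (2 : ℕ) ≤ (1 + z) ^ p + (1 - z) ^ p := by
  set F : ℝ → ℝ := fun t ↦ (1 + t) ^ p + (1 - t) ^ p - t ^ p - (p * (p - 1) / 2) * t ^ (2 : ℕ)
    with hF
  have hp1 : 1 ≤ p := by linarith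
  have hF' (t : ℝ) : HasDerivAt F (p * oddGap (p - 1) t) t := by
    refine ((((hasDerivAt_one_add_rpow (Or.inr hp1)).add
      (hasDerivAt_one_sub_rpow (Or.inr hp1))).sub (hasDerivAt_rpow_const (Or.inr hp1))).sub
      ((hasDerivAt_pow 2 t).const_mul (p * (p - 1) / 2))).congr_deriv ?_
    simp only [oddGap]
    ring
  have hmono : MonotoneOn F (Icc 0 1) := monotoneOn_Icc_of_hasDerivAt_nonneg hF' fun t ht ↦
    mul_nonneg (by linarith) (oddGap_nonneg (by linarith) (Ioo_subset_Icc_self ht))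
  have hF0 : F 0 = 2 := by norm_num [hF, zero_rpow (by linarith : p ≠ 0)]
  have := hmono (left_mem_Icc.2 zero_le_one) ⟨hz0, hz1⟩ hz0
  rw [hF0, hF] at this
  linarith
end

section
/- For all real z ∈ [0,1] and real p ≥ 2, (1+z)^(p−1) − (1−z)^(p−1) − (p−1)z ≥ z^(p−1). -/
lemma aux_rpow_le_self {x q : ℝ} (hx0 : 0 ≤ x) (hx1 : x ≤ 1) (hq : 1 ≤ q) :
    x ^ q ≤ x := by
  rcases eq_or_lt_of_le hx0 with h | h
  · rw [← h, Real.zero_rpow (by linarith)]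
  · calc x ^ q ≤ x ^ (1 : ℝ) := Real.rpow_le_rpow_of_exponent_ge h hx1 hq
    _ = x := Real.rpow_one x

theorem stmt_4 (z p : ℝ) (hz0 : 0 ≤ z) (hz1 : z ≤ 1) (hp : 2 ≤ p) :
    z ^ (p - 1) ≤ (1 + z) ^ (p - 1) - (1 - z) ^ (p - 1) - (p - 1) * z := by
  have hq : (1:ℝ) ≤ p - 1 := by linarith
  have h1 : 1 + (p - 1) * z ≤ (1 + z) ^ (p - 1) :=
    one_add_mul_self_le_rpow_one_add (by linarith) hq
  have h2 : (1 - z) ^ (p - 1) ≤ 1 - z := aux_rpow_le_self (by linarith) (by linarith) hq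
  have h3 : z ^ (p - 1) ≤ z := aux_rpow_le_self hz0 hz1 hq
  linarith
end

section
/- Let G be a finite simple graph on vertex set {1,...,n} with edge-vertex incidence matrix M(G) ∈ R^{|E|×n} (each row has a +1 and a −1 in the columns of the two endpoints of the corresponding edge, zeros elsewhere, with an arbitrary orientation). Then for every p ≥ 1, the maximum of ‖M(G)x‖_p over all x with ‖x‖_∞ ≤ 1 equals 2·(maxcut(G))^(1/p), where maxcut(G) is the maximum over subsets S of the vertex set of the number of edges with exactly one endpoint in S. -/
open Finset

private lemma convex_red {n m : ℕ} (a b : Fin m → Fin n) (C : ℝ)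
    (hub : ∀ x : Fin n → ℝ, (∀ j, x j = 1 ∨ x j = -1) →
      ∑ i, |x (a i) - x (b i)| ≤ C) :
    ∀ k : ℕ, ∀ x : Fin n → ℝ, (∀ j, |x j| ≤ 1) →
      (univ.filter (fun j => ¬(x j = 1 ∨ x j = -1))).card ≤ k →
      ∑ i, |x (a i) - x (b i)| ≤ C := by
  intro k
  induction k with
  | zero =>
    intro x hx hcard
    apply hub
    intro j
    by_contra h
    have hj : j ∈ univ.filter (fun j => ¬(x j = 1 ∨ x j = -1)) := by
      simp only [mem_filter, mem_univ, true_and]; exact h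
    have := Finset.card_pos.mpr ⟨j, hj⟩
    omega
  | succ k ih =>
    intro x hx hcard
    by_cases hall : ∀ j, x j = 1 ∨ x j = -1
    · exact hub x hall
    push_neg at hall
    obtain ⟨j, hj1, hj2⟩ := hall
    have hxj := abs_le.mp (hx j)
    set lam := (x j + 1) / 2 with hlam
    have hl0 : 0 ≤ lam := by rw [hlam]; linarith [hxj.1]
    have hl1 : lam ≤ 1 := by rw [hlam]; linarith [hxj.2]
    set xp := Function.update x j 1 with hxp
    set xm := Function.update x j (-1) with hxm
    have hpt : ∀ l, x l = lam * xp l + (1 - lam) * xm l := by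
      intro l
      by_cases h : l = j
      · subst h; simp only [hxp, hxm, Function.update_self]; rw [hlam]; ring
      · simp only [hxp, hxm, Function.update_of_ne h]; ring
    have hjin : j ∈ univ.filter (fun l => ¬(x l = 1 ∨ x l = -1)) := by
      simp only [mem_filter, mem_univ, true_and]; tauto
    have hsub : ∀ (c : ℝ), (univ.filter (fun l => ¬(Function.update x j c l = 1 ∨
        Function.update x j c l = -1))).card ≤ k → True := fun _ _ => trivial
    have hcard' : ∀ (c : ℝ), c = 1 ∨ c = -1 →
        (univ.filter (fun l => ¬(Function.update x j c l = 1 ∨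
          Function.update x j c l = -1))).card ≤ k := by
      intro c hc
      have hsubset : (univ.filter (fun l => ¬(Function.update x j c l = 1 ∨
          Function.update x j c l = -1))) ⊆
          (univ.filter (fun l => ¬(x l = 1 ∨ x l = -1))).erase j := by
        intro l hl
        simp only [mem_filter, mem_univ, true_and] at hl
        have hlj : l ≠ j := by
          intro h; subst h; rw [Function.update_self] at hl; tauto
        rw [Finset.mem_erase]
        refine ⟨hlj, ?_⟩
        simp only [mem_filter, mem_univ, true_and]
        rwa [Function.update_of_ne hlj] at hl
      calc _ ≤ ((univ.filter (fun l => ¬(x l = 1 ∨ x l = -1))).erase j).card :=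
            Finset.card_le_card hsubset
        _ ≤ (univ.filter (fun l => ¬(x l = 1 ∨ x l = -1))).card - 1 :=
            le_of_eq (Finset.card_erase_of_mem hjin)
        _ ≤ k := by omega
    have hxp1 : ∀ l, |xp l| ≤ 1 := by
      intro l; by_cases h : l = j
      · subst h; simp [hxp]
      · simp only [hxp, Function.update_of_ne h]; exact hx l
    have hxm1 : ∀ l, |xm l| ≤ 1 := by
      intro l; by_cases h : l = j
      · subst h; simp [hxm]
      · simp only [hxm, Function.update_of_ne h]; exact hx l
    have hbp := ih xp hxp1 (hcard' 1 (Or.inl rfl))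
    have hbm := ih xm hxm1 (hcard' (-1) (Or.inr rfl))
    have hsum : ∑ i, |x (a i) - x (b i)| ≤
        lam * ∑ i, |xp (a i) - xp (b i)| + (1 - lam) * ∑ i, |xm (a i) - xm (b i)| := by
      rw [Finset.mul_sum, Finset.mul_sum, ← Finset.sum_add_distrib]
      apply Finset.sum_le_sum
      intro i _
      have heq : x (a i) - x (b i) =
          lam * (xp (a i) - xp (b i)) + (1 - lam) * (xm (a i) - xm (b i)) := by
        rw [hpt (a i), hpt (b i)]; ring
      calc |x (a i) - x (b i)|
          ≤ |lam * (xp (a i) - xp (b i))| + |(1 - lam) * (xm (a i) - xm (b i))| := by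
            rw [heq]; exact abs_add_le _ _
        _ = lam * |xp (a i) - xp (b i)| + (1 - lam) * |xm (a i) - xm (b i)| := by
            rw [abs_mul, abs_mul, abs_of_nonneg hl0, abs_of_nonneg (show (0:ℝ) ≤ 1 - lam by linarith)]
    have h1 := mul_le_mul_of_nonneg_left hbp hl0
    have h2 := mul_le_mul_of_nonneg_left hbm (by linarith : (0:ℝ) ≤ 1 - lam)
    nlinarith

/-- The `∞,p`-norm maximum of a signed incidence matrix equals `2 · maxcut^(1/p)`.
Rows of `M` are indexed by edges `i`, with endpoints `a i ≠ b i`. -/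
theorem stmt_7 (n m : ℕ) (a b : Fin m → Fin n) (hab : ∀ i, a i ≠ b i)
    (M : Matrix (Fin m) (Fin n) ℝ)
    (hM : ∀ i j, M i j = if j = a i then 1 else if j = b i then -1 else 0)
    (p : ℝ) (hp : 1 ≤ p) (maxcut : ℕ)
    (hmc : IsGreatest
      {k : ℕ | ∃ S : Finset (Fin n),
        k = (univ.filter (fun i => (a i ∈ S) ≠ (b i ∈ S))).card} maxcut) :
    IsGreatest
      {r : ℝ | ∃ x : Fin n → ℝ, (∀ j, |x j| ≤ 1) ∧
        r = (∑ i, |∑ j, M i j * x j| ^ p) ^ (1 / p)}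
      (2 * (maxcut : ℝ) ^ (1 / p)) := by
  have hp0 : p ≠ 0 := by intro h; rw [h] at hp; linarith
  have hrow : ∀ (x : Fin n → ℝ) (i : Fin m), ∑ j, M i j * x j = x (a i) - x (b i) := by
    intro x i
    have hterm : ∀ j, M i j * x j =
        (if j = a i then x j else 0) + (if j = b i then -x j else 0) := by
      intro j
      rw [hM]
      by_cases h1 : j = a i
      · subst h1; simp [hab i]
      · by_cases h2 : j = b i
        · subst h2; simp [h1]
        · simp [h1, h2]
    rw [Finset.sum_congr rfl (fun j _ => hterm j), Finset.sum_add_distrib]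
    simp [Finset.sum_ite_eq', sub_eq_add_neg]
  have hkey : ∀ c : ℝ, 0 ≤ c → ((2:ℝ) ^ p * c) ^ (1/p) = 2 * c ^ (1/p) := by
    intro c hc
    rw [Real.mul_rpow (le_of_lt (Real.rpow_pos_of_pos two_pos p)) hc,
        ← Real.rpow_mul (by norm_num : (0:ℝ) ≤ 2), mul_one_div_cancel hp0, Real.rpow_one]
  constructor
  · -- membership
    obtain ⟨S, hS⟩ := hmc.1
    refine ⟨fun j => if j ∈ S then 1 else -1, fun j => by dsimp only; split <;> norm_num, ?_⟩
    have hterm : ∀ i : Fin m,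
        |(if a i ∈ S then (1:ℝ) else -1) - (if b i ∈ S then 1 else -1)| ^ p =
        if (a i ∈ S) ≠ (b i ∈ S) then (2:ℝ) ^ p else 0 := by
      intro i
      by_cases ha : a i ∈ S <;> by_cases hb : b i ∈ S <;>
        simp [ha, hb, Real.zero_rpow hp0] <;> norm_num [abs_of_nonneg, Real.zero_rpow hp0]
    have hsum : ∑ i, |∑ j, M i j * (if j ∈ S then (1:ℝ) else -1)| ^ p
        = (2:ℝ) ^ p * maxcut := by
      calc ∑ i, |∑ j, M i j * (if j ∈ S then (1:ℝ) else -1)| ^ p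
          = ∑ i, (if (a i ∈ S) ≠ (b i ∈ S) then (2:ℝ) ^ p else 0) := by
            refine Finset.sum_congr rfl fun i _ => ?_
            rw [hrow]; exact hterm i
        _ = ((univ.filter (fun i => (a i ∈ S) ≠ (b i ∈ S))).card : ℝ) * 2 ^ p := by
            rw [Finset.sum_ite, Finset.sum_const, Finset.sum_const_zero, add_zero,
              nsmul_eq_mul]
        _ = (2:ℝ) ^ p * maxcut := by rw [hS]; ring
    rw [hsum, hkey _ (Nat.cast_nonneg maxcut)]
  · -- upper bound
    rintro r ⟨x, hx, rfl⟩
    have hbase : ∀ y : Fin n → ℝ, (∀ j, y j = 1 ∨ y j = -1) →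
        ∑ i, |y (a i) - y (b i)| ≤ 2 * maxcut := by
      intro y hy
      set S := univ.filter (fun j => y j = 1) with hSdef
      have hterm : ∀ i : Fin m, |y (a i) - y (b i)| =
          if (a i ∈ S) ≠ (b i ∈ S) then (2:ℝ) else 0 := by
        intro i
        have hma : a i ∈ S ↔ y (a i) = 1 := by simp [hSdef]
        have hmb : b i ∈ S ↔ y (b i) = 1 := by simp [hSdef]
        rcases hy (a i) with h1|h1 <;> rcases hy (b i) with h2|h2 <;>
          simp [h1, h2, hma, hmb] <;> norm_num
      have hle : ((univ.filter (fun i => (a i ∈ S) ≠ (b i ∈ S))).card : ℝ) ≤ maxcut := by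
        exact_mod_cast hmc.2 ⟨S, rfl⟩
      calc ∑ i, |y (a i) - y (b i)|
          = ∑ i, (if (a i ∈ S) ≠ (b i ∈ S) then (2:ℝ) else 0) :=
            Finset.sum_congr rfl fun i _ => hterm i
        _ = ((univ.filter (fun i => (a i ∈ S) ≠ (b i ∈ S))).card : ℝ) * 2 := by
            rw [Finset.sum_ite, Finset.sum_const, Finset.sum_const_zero, add_zero,
              nsmul_eq_mul]
        _ ≤ 2 * maxcut := by linarith
    have h1 : ∑ i, |x (a i) - x (b i)| ≤ 2 * maxcut :=
      convex_red a b (2 * maxcut) hbase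
        (univ.filter (fun j => ¬(x j = 1 ∨ x j = -1))).card x hx le_rfl
    have hd2 : ∀ i : Fin m, |x (a i) - x (b i)| ≤ 2 := by
      intro i
      calc |x (a i) - x (b i)| ≤ |x (a i)| + |x (b i)| := abs_sub _ _
        _ ≤ 2 := by linarith [hx (a i), hx (b i)]
    have h2 : ∀ i : Fin m, |x (a i) - x (b i)| ^ p ≤ 2 ^ (p - 1) * |x (a i) - x (b i)| := by
      intro i
      set d := |x (a i) - x (b i)| with hd
      have hd0 : (0:ℝ) ≤ d := abs_nonneg _
      rcases hd0.eq_or_lt with h | h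
      · rw [← h, Real.zero_rpow hp0, mul_zero]
      · have : d ^ p = d ^ (p - 1) * d := by
          conv_lhs => rw [show p = (p - 1) + 1 by ring]
          rw [Real.rpow_add h, Real.rpow_one]
        rw [this]
        exact mul_le_mul_of_nonneg_right
          (Real.rpow_le_rpow hd0 (hd2 i) (by linarith)) hd0
    have h2p : (2:ℝ) ^ (p - 1) * 2 = 2 ^ p := by
      calc (2:ℝ) ^ (p-1) * 2 = 2 ^ (p-1) * 2 ^ (1:ℝ) := by rw [Real.rpow_one]
        _ = 2 ^ ((p-1) + 1) := (Real.rpow_add two_pos _ _).symm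
        _ = 2 ^ p := by norm_num
    have h3 : ∑ i, |∑ j, M i j * x j| ^ p ≤ 2 ^ p * maxcut := by
      calc ∑ i, |∑ j, M i j * x j| ^ p
          = ∑ i, |x (a i) - x (b i)| ^ p := by
            refine Finset.sum_congr rfl fun i _ => ?_; rw [hrow]
        _ ≤ ∑ i, 2 ^ (p - 1) * |x (a i) - x (b i)| :=
            Finset.sum_le_sum fun i _ => h2 i
        _ = 2 ^ (p - 1) * ∑ i, |x (a i) - x (b i)| := by rw [Finset.mul_sum]
        _ ≤ 2 ^ (p - 1) * (2 * maxcut) :=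
            mul_le_mul_of_nonneg_left h1 (le_of_lt (Real.rpow_pos_of_pos two_pos _))
        _ = 2 ^ p * maxcut := by rw [← h2p]; ring
    have hnn : (0:ℝ) ≤ ∑ i, |∑ j, M i j * x j| ^ p :=
      Finset.sum_nonneg fun i _ => Real.rpow_nonneg (abs_nonneg _) p
    calc (∑ i, |∑ j, M i j * x j| ^ p) ^ (1/p)
        ≤ ((2:ℝ) ^ p * maxcut) ^ (1/p) :=
          Real.rpow_le_rpow hnn h3 (by positivity)
      _ = 2 * (maxcut:ℝ) ^ (1/p) := hkey _ (Nat.cast_nonneg maxcut)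
end

section
/- Let n ≥ 2, p ≥ 2 real, and let A ∈ R^{2n×n} be the matrix with rows (for i = 1,...,n, cyclically) e_i − e_{i+1} and e_i + e_{i+1} (transposed). Then for every x ∈ R^n with ‖x‖_p^p = n, one has ‖Ax‖_p^p ≤ n·2^p, with equality attained at every x ∈ {−1,1}^n. -/
private lemma aux_rpow_add_le {p : ℝ} (hp : 1 ≤ p) {x y : ℝ} (hx : 0 ≤ x) (hy : 0 ≤ y) :
    x ^ p + y ^ p ≤ (x + y) ^ p := by
  lift x to NNReal using hx
  lift y to NNReal using hy
  exact_mod_cast NNReal.add_rpow_le_rpow_add x y hp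

private lemma aux_rpow_add_le' {p : ℝ} (hp : 1 ≤ p) {x y : ℝ} (hx : 0 ≤ x) (hy : 0 ≤ y) :
    (x + y) ^ p ≤ 2 ^ (p - 1) * (x ^ p + y ^ p) := by
  lift x to NNReal using hx
  lift y to NNReal using hy
  exact_mod_cast NNReal.rpow_add_le_mul_rpow_add_rpow x y hp

private lemma clarkson {p : ℝ} (hp : 2 ≤ p) (a b : ℝ) :
    |a + b| ^ p + |a - b| ^ p ≤ 2 ^ (p - 1) * (|a| ^ p + |b| ^ p) := by
  have hq : (1 : ℝ) ≤ p / 2 := by linarith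
  have key : ∀ u : ℝ, (u ^ 2 : ℝ) ^ (p / 2) = |u| ^ p := by
    intro u
    rw [← sq_abs, ← Real.rpow_natCast |u| 2, ← Real.rpow_mul (abs_nonneg u)]
    congr 1
    push_cast
    ring
  rw [← key (a + b), ← key (a - b), ← key a, ← key b]
  calc ((a + b) ^ 2) ^ (p / 2) + ((a - b) ^ 2) ^ (p / 2)
      ≤ ((a + b) ^ 2 + (a - b) ^ 2) ^ (p / 2) :=
        aux_rpow_add_le hq (sq_nonneg _) (sq_nonneg _)
    _ = (2 * a ^ 2 + 2 * b ^ 2) ^ (p / 2) := by ring_nf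
    _ ≤ 2 ^ (p / 2 - 1) * ((2 * a ^ 2) ^ (p / 2) + (2 * b ^ 2) ^ (p / 2)) :=
        aux_rpow_add_le' hq (by positivity) (by positivity)
    _ = 2 ^ (p - 1) * ((a ^ 2) ^ (p / 2) + (b ^ 2) ^ (p / 2)) := by
        rw [Real.mul_rpow (by norm_num) (sq_nonneg a),
          Real.mul_rpow (by norm_num) (sq_nonneg b), mul_add, ← mul_assoc, ← mul_assoc,
          ← Real.rpow_add two_pos,
          show p / 2 - 1 + p / 2 = p - 1 by ring, mul_add]

/-- For the cyclic pattern matrix `A`, on the sphere `‖x‖_p^p = n` one has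
`‖Ax‖_p^p ≤ n · 2^p`, with equality attained at every sign vector. -/
theorem stmt_12 (n : ℕ) (hn : 2 ≤ n) (p : ℝ) (hp : 2 ≤ p)
    (A : Matrix (Fin n × Fin 2) (Fin n) ℝ)
    (hA : ∀ (i j : Fin n),
      A (i, 0) j = (if j = i then 1 else if j = i + ⟨1, by omega⟩ then -1 else 0) ∧
      A (i, 1) j = (if j = i then 1 else if j = i + ⟨1, by omega⟩ then 1 else 0)) :
    (∀ x : Fin n → ℝ, (∑ j, |x j| ^ p) = n →
        ∑ r, |∑ j, A r j * x j| ^ p ≤ (n : ℝ) * 2 ^ p) ∧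
    (∀ x : Fin n → ℝ, (∀ j, x j = 1 ∨ x j = -1) →
        ∑ r, |∑ j, A r j * x j| ^ p = (n : ℝ) * 2 ^ p) := by
  haveI : NeZero n := ⟨by omega⟩
  set e : Fin n := ⟨1, by omega⟩ with he
  have hii : ∀ i : Fin n, i + e ≠ i := by
    intro i h
    have h' : i + e = i + 0 := by rw [add_zero]; exact h
    have he0 : e = 0 := add_left_cancel h'
    simp [he, Fin.ext_iff] at he0
  -- compute row sums
  have hrow : ∀ (x : Fin n → ℝ) (i : Fin n) (c : ℝ),
      (∑ j, (if j = i then 1 else if j = i + e then c else 0) * x j)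
        = x i + c * x (i + e) := by
    intro x i c
    have : ∀ j : Fin n, (if j = i then 1 else if j = i + e then c else 0) * x j
        = (if j = i then x j else 0) + (if j = i + e then c * x j else 0) := by
      intro j
      by_cases h1 : j = i
      · subst h1
        rw [if_pos rfl, if_pos rfl, if_neg fun h => hii j h.symm]
        ring
      · rw [if_neg h1, if_neg h1]
        by_cases h2 : j = i + e <;> simp [h2]
    rw [Finset.sum_congr rfl fun j _ => this j, Finset.sum_add_distrib]
    simp
  have hsum : ∀ x : Fin n → ℝ,
      ∑ r, |∑ j, A r j * x j| ^ p
        = ∑ i, (|x i + (-1) * x (i + e)| ^ p + |x i + 1 * x (i + e)| ^ p) := by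
    intro x
    rw [Fintype.sum_prod_type]
    refine Finset.sum_congr rfl fun i _ => ?_
    rw [Fin.sum_univ_two]
    congr 1
    · rw [Finset.sum_congr rfl fun j _ => by rw [(hA i j).1], hrow]
    · rw [Finset.sum_congr rfl fun j _ => by rw [(hA i j).2], hrow]
  have h2p : (2 : ℝ) ^ (p - 1) * 2 = 2 ^ p := by
    rw [Real.rpow_sub two_pos, Real.rpow_one, div_mul_cancel₀]
    norm_num
  constructor
  · intro x hx
    rw [hsum x]
    have hbound : ∀ i : Fin n,
        |x i + (-1) * x (i + e)| ^ p + |x i + 1 * x (i + e)| ^ p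
          ≤ 2 ^ (p - 1) * (|x i| ^ p + |x (i + e)| ^ p) := by
      intro i
      have := clarkson hp (x i) (x (i + e))
      have h1 : x i + (-1) * x (i + e) = x i - x (i + e) := by ring
      have h2 : x i + 1 * x (i + e) = x i + x (i + e) := by ring
      rw [h1, h2]
      linarith
    calc ∑ i, (|x i + (-1) * x (i + e)| ^ p + |x i + 1 * x (i + e)| ^ p)
        ≤ ∑ i, 2 ^ (p - 1) * (|x i| ^ p + |x (i + e)| ^ p) :=
          Finset.sum_le_sum fun i _ => hbound i
      _ = 2 ^ (p - 1) * (∑ i, |x i| ^ p + ∑ i, |x (i + e)| ^ p) := by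
          rw [← Finset.mul_sum, Finset.sum_add_distrib]
      _ = 2 ^ (p - 1) * ((n : ℝ) + (n : ℝ)) := by
          rw [hx]
          congr 1
          congr 1
          rw [show (∑ i, |x (i + e)| ^ p) = ∑ i, |x i| ^ p from
            Equiv.sum_comp (Equiv.addRight e) (fun i => |x i| ^ p), hx]
      _ = (n : ℝ) * 2 ^ p := by rw [← h2p]; ring
  · intro x hx
    rw [hsum x]
    have hterm : ∀ i : Fin n,
        |x i + (-1) * x (i + e)| ^ p + |x i + 1 * x (i + e)| ^ p = 2 ^ p := by
      intro i
      have h0 : (0 : ℝ) ^ p = 0 := Real.zero_rpow (by linarith)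
      have habs2 : |(2 : ℝ)| = 2 := by norm_num
      have habsm2 : |(-2 : ℝ)| = 2 := by norm_num
      rcases hx i with h1 | h1 <;> rcases hx (i + e) with h2 | h2 <;>
        rw [h1, h2] <;> norm_num <;> rw [h0] <;> ring
    rw [Finset.sum_congr rfl fun i _ => hterm i, Finset.sum_const, Finset.card_univ,
      Fintype.card_fin, nsmul_eq_mul]
end
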